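/- arXiv:2108.07406 — 2 statements merged into one kernel-verified Lean document; each statement's English description precedes it below -/
import Mathlib

section
/- Let n ≥ 1, α > 0, μ > 0, L ≥ 0, and let f : ℝⁿ → ℝ be L-smooth. Then for every p ∈ ℝⁿ, ‖∇f(p) − ∫ (n/(2α²μ))·(f(p + μ•v) − f(p − μ•v)) • v dσ_α(v)‖ ≤ L·n·α·μ/2, where the integral is over v drawn from the uniform probability measure σ_α on the origin-centered sphere of radius α. -/
/-!
Rotation invariance makes `σ` isotropic. Reflections show that `∫ ⟪x, v⟫² dσ` depends only on
`‖x‖`; summing over an orthonormal basis gives `n ∫ ⟪x, v⟫² dσ = α² ‖x‖²`, and polarization then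
gives `n ∫ ⟪x, v⟫ v dσ = α² x`. Hence `∇f(p)` is the mean of `(n/α²) ⟪∇f(p), v⟫ v`, and the descent
lemma `|f(p + h) - f(p - h) - 2 ⟪∇f(p), h⟫| ≤ L ‖h‖²` bounds its distance to the estimator by
`Lnαμ/2` on the sphere.
-/

open MeasureTheory
open scoped RealInnerProductSpace

section Descent
variable {E : Type*} [NormedAddCommGroup E] [InnerProductSpace ℝ E] [CompleteSpace E]

theorem abs_sub_sub_inner_gradient_le {f : E → ℝ} {L : ℝ} (hf : Differentiable ℝ f)
    (hlip : ∀ x y, ‖gradient f x - gradient f y‖ ≤ L * ‖x - y‖) (x h : E) :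
    |f (x + h) - f x - ⟪gradient f x, h⟫| ≤ L / 2 * ‖h‖ ^ 2 := by
  have hφ (t : ℝ) : HasDerivAt (fun t : ℝ => f (x + t • h) - f x - t * ⟪gradient f x, h⟫)
      ⟪gradient f (x + t • h) - gradient f x, h⟫ t := by
    have hline : HasDerivAt (fun t : ℝ => x + t • h) h t := by
      simpa using ((hasDerivAt_id t).smul_const h).const_add x
    have hf' := (hf _).hasGradientAt.hasFDerivAt.comp_hasDerivAt t hline
    exact ((hf'.sub_const (f x)).fun_sub ((hasDerivAt_id t).mul_const _)).congr_deriv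
      (by simp [inner_sub_left])
  have hB (t : ℝ) : HasDerivAt (fun t : ℝ => L / 2 * ‖h‖ ^ 2 * t ^ 2) (L * ‖h‖ ^ 2 * t) t :=
    ((hasDerivAt_pow 2 t).const_mul _).congr_deriv (by ring)
  have hbound (t : ℝ) (ht : t ∈ Set.Ico (0 : ℝ) 1) :
      ‖⟪gradient f (x + t • h) - gradient f x, h⟫‖ ≤ L * ‖h‖ ^ 2 * t :=
    calc ‖⟪gradient f (x + t • h) - gradient f x, h⟫‖
        ≤ ‖gradient f (x + t • h) - gradient f x‖ * ‖h‖ := norm_inner_le_norm _ _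
      _ ≤ L * ‖t • h‖ * ‖h‖ := by
          gcongr
          simpa using hlip (x + t • h) x
      _ = L * ‖h‖ ^ 2 * t := by rw [norm_smul, Real.norm_of_nonneg ht.1]; ring
  simpa using image_norm_le_of_norm_deriv_right_le_deriv_boundary
    (fun t _ => (hφ t).continuousAt.continuousWithinAt) (fun t _ => (hφ t).hasDerivWithinAt)
    (by simp) hB hbound (Set.right_mem_Icc.2 zero_le_one)

theorem abs_sub_sub_two_inner_gradient_le {f : E → ℝ} {L : ℝ} (hf : Differentiable ℝ f)
    (hlip : ∀ x y, ‖gradient f x - gradient f y‖ ≤ L * ‖x - y‖) (x h : E) :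
    |f (x + h) - f (x - h) - 2 * ⟪gradient f x, h⟫| ≤ L * ‖h‖ ^ 2 := by
  have hplus := abs_sub_sub_inner_gradient_le hf hlip x h
  have hminus := abs_sub_sub_inner_gradient_le hf hlip x (-h)
  rw [inner_neg_right, norm_neg, ← sub_eq_add_neg] at hminus
  rw [abs_le] at hplus hminus ⊢
  constructor <;> linarith

theorem norm_smul_sub_two_point_estimator_le {f : E → ℝ} {L : ℝ} (hf : Differentiable ℝ f)
    (hlip : ∀ x y, ‖gradient f x - gradient f y‖ ≤ L * ‖x - y‖) (p : E) {v : E} {d α μ : ℝ}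
    (hd : 0 ≤ d) (hα : 0 < α) (hμ : 0 < μ) (hv : ‖v‖ = α) :
    ‖(d / α ^ 2 * ⟪gradient f p, v⟫) • v
        - (d / (2 * α ^ 2 * μ) * (f (p + μ • v) - f (p - μ • v))) • v‖ ≤ L * d * α * μ / 2 := by
  have hcoeff : d / α ^ 2 * ⟪gradient f p, v⟫ - d / (2 * α ^ 2 * μ) * (f (p + μ • v) - f (p - μ • v))
      = -(d / (2 * α ^ 2 * μ)) * (f (p + μ • v) - f (p - μ • v) - 2 * ⟪gradient f p, μ • v⟫) := by
    rw [real_inner_smul_right]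
    field_simp
    ring
  rw [← sub_smul, norm_smul, hcoeff, norm_mul, norm_neg, Real.norm_of_nonneg (by positivity),
    Real.norm_eq_abs, hv]
  calc d / (2 * α ^ 2 * μ) * |f (p + μ • v) - f (p - μ • v) - 2 * ⟪gradient f p, μ • v⟫| * α
      ≤ d / (2 * α ^ 2 * μ) * (L * ‖μ • v‖ ^ 2) * α := by
        gcongr
        exact abs_sub_sub_two_inner_gradient_le hf hlip p (μ • v)
    _ = L * d * α * μ / 2 := by
        rw [norm_smul, hv, Real.norm_of_nonneg hμ.le]
        field_simp

end Descent

section Isotropy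
variable {E : Type*} [NormedAddCommGroup E] [InnerProductSpace ℝ E]
  [MeasurableSpace E] [BorelSpace E] {σ : Measure E} {α : ℝ}

theorem integral_inner_sq_eq_of_norm_eq (hσ : ∀ R : E ≃ₗᵢ[ℝ] E, σ.map R = σ) {x y : E}
    (hxy : ‖x‖ = ‖y‖) : ∫ v, ⟪x, v⟫ ^ 2 ∂σ = ∫ v, ⟪y, v⟫ ^ 2 ∂σ := by
  set R := (ℝ ∙ (x - y))ᗮ.reflection
  have hRx : R x = y := Submodule.reflection_sub hxy
  rw [← hRx, ← MeasurePreserving.integral_comp ⟨R.continuous.measurable, hσ R⟩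
    R.toHomeomorph.measurableEmbedding (fun v => ⟪R x, v⟫ ^ 2)]
  simp_rw [LinearIsometryEquiv.inner_map_map]

variable [FiniteDimensional ℝ E]

theorem integrable_inner_smul_of_ae_norm_eq [IsFiniteMeasure σ] (hσ : ∀ᵐ v ∂σ, ‖v‖ = α) (x : E) :
    Integrable (fun v => ⟪x, v⟫ • v) σ := by
  refine Integrable.mono' (integrable_const (‖x‖ * α * α))
    (by fun_prop : Continuous fun v : E => ⟪x, v⟫ • v).aestronglyMeasurable ?_
  filter_upwards [hσ] with v hv
  rw [norm_smul, ← hv]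
  exact mul_le_mul_of_nonneg_right (norm_inner_le_norm x v) (norm_nonneg v)

theorem integrable_inner_sq_of_ae_norm_eq [IsFiniteMeasure σ] (hσ : ∀ᵐ v ∂σ, ‖v‖ = α) (x : E) :
    Integrable (fun v => ⟪x, v⟫ ^ 2) σ := by
  simpa only [real_inner_smul_right, ← sq] using
    (integrable_inner_smul_of_ae_norm_eq hσ x).const_inner (𝕜 := ℝ) x

theorem finrank_mul_integral_inner_sq [IsProbabilityMeasure σ] (hσ_sphere : ∀ᵐ v ∂σ, ‖v‖ = α)
    (hσ_rot : ∀ R : E ≃ₗᵢ[ℝ] E, σ.map R = σ) (x : E) :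
    Module.finrank ℝ E * ∫ v, ⟪x, v⟫ ^ 2 ∂σ = α ^ 2 * ‖x‖ ^ 2 := by
  set b := stdOrthonormalBasis ℝ E
  have hbasis (i) : ∫ v, ⟪x, v⟫ ^ 2 ∂σ = ‖x‖ ^ 2 * ∫ v, ⟪b i, v⟫ ^ 2 ∂σ := by
    rw [integral_inner_sq_eq_of_norm_eq hσ_rot (y := ‖x‖ • b i) (by simp [norm_smul])]
    simp [real_inner_smul_left, mul_pow, integral_const_mul]
  have htrace : ∑ i, ∫ v, ⟪b i, v⟫ ^ 2 ∂σ = α ^ 2 := by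
    rw [← integral_finsetSum _ fun i _ => integrable_inner_sq_of_ae_norm_eq hσ_sphere (b i)]
    rw [integral_congr_ae (g := fun _ => α ^ 2)
      (hσ_sphere.mono fun v hv => by simp [b.sum_sq_inner_right, hv])]
    simp
  calc (Module.finrank ℝ E : ℝ) * ∫ v, ⟪x, v⟫ ^ 2 ∂σ = ∑ i, ∫ v, ⟪x, v⟫ ^ 2 ∂σ := by
        rw [Finset.sum_const, Finset.card_fin, nsmul_eq_mul]
    _ = α ^ 2 * ‖x‖ ^ 2 := by
        rw [Finset.sum_congr rfl fun i _ => hbasis i, ← Finset.mul_sum, htrace, mul_comm]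

theorem finrank_mul_integral_inner_mul_inner [IsProbabilityMeasure σ]
    (hσ_sphere : ∀ᵐ v ∂σ, ‖v‖ = α) (hσ_rot : ∀ R : E ≃ₗᵢ[ℝ] E, σ.map R = σ) (x y : E) :
    Module.finrank ℝ E * ∫ v, ⟪x, v⟫ * ⟪y, v⟫ ∂σ = α ^ 2 * ⟪x, y⟫ := by
  have hpolar (v : E) : ⟪x, v⟫ * ⟪y, v⟫ = (⟪x + y, v⟫ ^ 2 - ⟪x - y, v⟫ ^ 2) / 4 := by
    rw [inner_add_left, inner_sub_left]; ring
  simp_rw [hpolar, integral_div, integral_sub (integrable_inner_sq_of_ae_norm_eq hσ_sphere _)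
    (integrable_inner_sq_of_ae_norm_eq hσ_sphere _)]
  rw [mul_div_assoc', mul_sub, finrank_mul_integral_inner_sq hσ_sphere hσ_rot,
    finrank_mul_integral_inner_sq hσ_sphere hσ_rot, ← mul_sub, norm_add_sq_real, norm_sub_sq_real]
  ring

theorem finrank_smul_integral_inner_smul [IsProbabilityMeasure σ]
    (hσ_sphere : ∀ᵐ v ∂σ, ‖v‖ = α) (hσ_rot : ∀ R : E ≃ₗᵢ[ℝ] E, σ.map R = σ) (x : E) :
    (Module.finrank ℝ E : ℝ) • ∫ v, ⟪x, v⟫ • v ∂σ = α ^ 2 • x := by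
  refine ext_inner_right ℝ fun y => ?_
  rw [real_inner_smul_left, real_inner_smul_left, real_inner_comm,
    ← integral_inner (integrable_inner_smul_of_ae_norm_eq hσ_sphere x)]
  simp_rw [real_inner_smul_right, real_inner_comm y]
  rw [finrank_mul_integral_inner_mul_inner hσ_sphere hσ_rot, real_inner_comm]

end Isotropy

theorem norm_integral_sub_integral_le_of_ae_norm_sub_le {Ω G : Type*} [MeasurableSpace Ω]
    [NormedAddCommGroup G] [NormedSpace ℝ G] {ν : Measure Ω} [IsProbabilityMeasure ν]
    {F H : Ω → G} {C : ℝ} (hF : Integrable F ν) (hH : AEStronglyMeasurable H ν)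
    (hFH : ∀ᵐ ω ∂ν, ‖F ω - H ω‖ ≤ C) : ‖∫ ω, F ω ∂ν - ∫ ω, H ω ∂ν‖ ≤ C := by
  have hsub : Integrable (fun ω => F ω - H ω) ν :=
    (integrable_const C).mono' (hF.aestronglyMeasurable.sub hH) hFH
  have hH' : Integrable H ν :=
    (hF.sub hsub).congr (.of_forall fun ω => sub_sub_cancel (F ω) (H ω))
  rw [← integral_sub hF hH']
  simpa using norm_integral_le_of_norm_le_const hFH

theorem gw_gradient_estimation_two_point_general
    (n : ℕ) (α μ L : ℝ) (hα : 0 < α) (hμ : 0 < μ)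
    (σ : Measure (EuclideanSpace ℝ (Fin n))) [IsProbabilityMeasure σ]
    (hσ_sphere : ∀ᵐ v ∂σ, ‖v‖ = α)
    (hσ_rot : ∀ R : EuclideanSpace ℝ (Fin n) ≃ₗᵢ[ℝ] EuclideanSpace ℝ (Fin n),
      Measure.map R σ = σ)
    (f : EuclideanSpace ℝ (Fin n) → ℝ)
    (hf_diff : Differentiable ℝ f)
    (hf_smooth : ∀ x y, ‖gradient f x - gradient f y‖ ≤ L * ‖x - y‖)
    (p : EuclideanSpace ℝ (Fin n)) :
    ‖gradient f p -
        ∫ v, ((n : ℝ) / (2 * α ^ 2 * μ) * (f (p + μ • v) - f (p - μ • v))) • v ∂σ‖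
      ≤ L * n * α * μ / 2 := by
  set g := gradient f p
  have hisotropic := finrank_smul_integral_inner_smul hσ_sphere hσ_rot g
  rw [finrank_euclideanSpace_fin] at hisotropic
  have hmean : ∫ v, ((n : ℝ) / α ^ 2 * ⟪g, v⟫) • v ∂σ = g := by
    simp_rw [mul_smul]
    rw [integral_smul, div_eq_inv_mul, mul_smul, hisotropic, smul_smul,
      inv_mul_cancel₀ (by positivity), one_smul]
  have hlinear : Integrable (fun v => ((n : ℝ) / α ^ 2 * ⟪g, v⟫) • v) σ := by
    simp_rw [mul_smul]
    exact (integrable_inner_smul_of_ae_norm_eq hσ_sphere g).smul ((n : ℝ) / α ^ 2)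
  have hf_cont := hf_diff.continuous
  have hestimator : AEStronglyMeasurable
      (fun v => ((n : ℝ) / (2 * α ^ 2 * μ) * (f (p + μ • v) - f (p - μ • v))) • v) σ :=
    (by fun_prop : Continuous _).aestronglyMeasurable
  have hclose := hσ_sphere.mono fun v hv =>
    norm_smul_sub_two_point_estimator_le hf_diff hf_smooth p n.cast_nonneg hα hμ hv
  simpa [hmean] using
    norm_integral_sub_integral_le_of_ae_norm_sub_le hlinear hestimator hclose

/-- For an `L`-smooth `f : ℝⁿ → ℝ`, the two-point zeroth-order gradient
estimator `(n/(2α²μ))·(f(p+μv) − f(p−μv)) • v` has bias at most `Lnαμ/2` in norm, where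
`v ∼ σ`, the uniform probability measure on the origin-centered sphere of radius `α`. -/
theorem gw_gradient_estimation_two_point
    (n : ℕ) (hn : 1 ≤ n) (α μ L : ℝ) (hα : 0 < α) (hμ : 0 < μ) (hL : 0 ≤ L)
    (σ : Measure (EuclideanSpace ℝ (Fin n))) [IsProbabilityMeasure σ]
    (hσ_sphere : ∀ᵐ v ∂σ, ‖v‖ = α)
    (hσ_rot : ∀ R : EuclideanSpace ℝ (Fin n) ≃ₗᵢ[ℝ] EuclideanSpace ℝ (Fin n),
      Measure.map R σ = σ)
    (f : EuclideanSpace ℝ (Fin n) → ℝ)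
    (hf_diff : Differentiable ℝ f)
    (hf_smooth : ∀ x y, ‖gradient f x - gradient f y‖ ≤ L * ‖x - y‖)
    (p : EuclideanSpace ℝ (Fin n)) :
    ‖gradient f p -
        ∫ v, ((n : ℝ) / (2 * α ^ 2 * μ) * (f (p + μ • v) - f (p - μ • v))) • v ∂σ‖
      ≤ L * n * α * μ / 2 :=
  gw_gradient_estimation_two_point_general n α μ L hα hμ σ hσ_sphere hσ_rot f hf_diff hf_smooth p
end

section
/- Let n ≥ 1, α > 0, μ > 0, L ≥ 0, and let f : ℝⁿ → ℝ be L-smooth. Then for every p ∈ ℝⁿ, ‖∫ ((1/(2μ)) ∫_{−μ}^{μ} ⟨∇f(p + t•v), v⟩ dt) • v dσ_α(v) − (α²/n) • ∇f(p)‖ ≤ L·α³·μ/2, where the outer integral is over v drawn from the uniform probability measure σ_α on the origin-centered sphere of radius α. -/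
/-!
Averaging the Lipschitz bound `|⟪∇f (p + t • v) - ∇f p, v⟫| ≤ L ‖v‖² |t|` over `t ∈ [-μ, μ]`
shows that the smoothed directional derivative differs from `⟪∇f p, v⟫` by at most
`L ‖v‖² μ / 2`, so on the sphere of radius `α` the error integrand has norm at most `L α³ μ / 2`.
It remains to see that `∫ ⟪w, v⟫ • v dσ = (α² / n) • w`, i.e. that the second-moment matrix of `σ`
is `(α² / n) I`: negating one coordinate preserves `σ` and kills the off-diagonal moments,
swapping two coordinates equalizes the diagonal ones, and their sum is `∫ ‖v‖² dσ = α²`.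
-/

open MeasureTheory

open scoped RealInnerProductSpace

lemma integral_abs_neg_to_self {μ : ℝ} (hμ : 0 ≤ μ) : ∫ t in -μ..μ, |t| = μ ^ 2 := by
  have hpos : ∫ t in (0 : ℝ)..μ, |t| = μ ^ 2 / 2 := by
    rw [intervalIntegral.integral_congr (g := fun t => t) fun t ht => abs_of_nonneg ?_, integral_id]
    · ring
    · exact (Set.uIcc_of_le hμ ▸ ht).1
  have hneg : ∫ t in -μ..0, |t| = ∫ t in (0 : ℝ)..μ, |t| := by
    simpa using (intervalIntegral.integral_comp_neg (a := 0) (b := μ) (fun t => |t|)).symm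
  rw [← intervalIntegral.integral_add_adjacent_intervals (b := 0)
    (continuous_abs.intervalIntegrable _ _) (continuous_abs.intervalIntegrable _ _), hneg, hpos]
  ring

lemma abs_intervalAverage_sub_le {g : ℝ → ℝ} {μ K : ℝ} (hμ : 0 < μ)
    (hg : IntervalIntegrable g volume (-μ) μ) (hK : ∀ t, |g t - g 0| ≤ K * |t|) :
    |(1 / (2 * μ)) * (∫ t in -μ..μ, g t) - g 0| ≤ K * μ / 2 := by
  have hdev : (1 / (2 * μ)) * (∫ t in -μ..μ, g t) - g 0
      = (1 / (2 * μ)) * ∫ t in -μ..μ, (g t - g 0) := by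
    rw [intervalIntegral.integral_sub hg intervalIntegrable_const, intervalIntegral.integral_const,
      smul_eq_mul]
    field_simp
    ring
  have hint : |∫ t in -μ..μ, (g t - g 0)| ≤ K * μ ^ 2 :=
    calc |∫ t in -μ..μ, (g t - g 0)|
        ≤ ∫ t in -μ..μ, K * |t| := by
          simp only [← Real.norm_eq_abs] at hK ⊢
          exact intervalIntegral.norm_integral_le_of_norm_le (by linarith)
            (ae_of_all _ fun t _ => hK t)
            ((by fun_prop : Continuous fun t : ℝ => K * ‖t‖).intervalIntegrable _ _)
      _ = K * μ ^ 2 := by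
          rw [intervalIntegral.integral_const_mul, integral_abs_neg_to_self hμ.le]
  rw [hdev, abs_mul, abs_of_pos (by positivity)]
  calc 1 / (2 * μ) * |∫ t in -μ..μ, (g t - g 0)| ≤ 1 / (2 * μ) * (K * μ ^ 2) := by gcongr
    _ = K * μ / 2 := by field_simp

lemma continuous_of_norm_sub_le_mul {E F : Type*} [SeminormedAddCommGroup E]
    [SeminormedAddCommGroup F] {g : E → F} {L : ℝ} (h : ∀ x y, ‖g x - g y‖ ≤ L * ‖x - y‖) :
    Continuous g :=
  (LipschitzWith.of_dist_le' (K := L) fun x y => by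
    simpa only [dist_eq_norm] using h x y).continuous

lemma Continuous.integrable_of_ae_norm_eq {E F : Type*} [NormedAddCommGroup E] [ProperSpace E]
    [MeasurableSpace E] [OpensMeasurableSpace E] [NormedAddCommGroup F] {σ : Measure E}
    [IsFiniteMeasureOnCompacts σ] {g : E → F} {α : ℝ} (hg : Continuous g)
    (hsphere : ∀ᵐ v ∂σ, ‖v‖ = α) : Integrable g σ := by
  rw [← Measure.restrict_eq_self_of_ae_mem (μ := σ) (s := Metric.sphere 0 α)
    (by simpa using hsphere)]
  exact hg.continuousOn.integrableOn_compact (isCompact_sphere 0 α)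

lemma integral_comp_linearIsometryEquiv_of_map_eq {E F : Type*} [NormedAddCommGroup E]
    [NormedSpace ℝ E] [MeasurableSpace E] [BorelSpace E] [NormedAddCommGroup F] [NormedSpace ℝ F]
    {σ : Measure E} {R : E ≃ₗᵢ[ℝ] E} (hR : Measure.map R σ = σ) (g : E → F) :
    ∫ v, g (R v) ∂σ = ∫ v, g v ∂σ :=
  MeasurePreserving.integral_comp ⟨R.continuous.measurable, hR⟩
    R.toHomeomorph.measurableEmbedding g

section SmoothedDirDeriv

variable {E : Type*} [NormedAddCommGroup E] [InnerProductSpace ℝ E] [CompleteSpace E]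

/-- For differentiable `f` this is the central difference
`(f (p + μ • v) - f (p - μ • v)) / (2 * μ)`. -/
noncomputable def smoothedDirDeriv (f : E → ℝ) (μ : ℝ) (p v : E) : ℝ :=
  (1 / (2 * μ)) * ∫ t in -μ..μ, ⟪gradient f (p + t • v), v⟫

lemma continuous_smoothedDirDeriv {f : E → ℝ} (hf : Continuous (gradient f)) (μ : ℝ) (p : E) :
    Continuous (smoothedDirDeriv f μ p) :=
  continuous_const.mul <| intervalIntegral.continuous_parametric_intervalIntegral_of_continuous'
    ((hf.comp (continuous_const.add (continuous_snd.smul continuous_fst))).inner continuous_fst) _ _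

lemma abs_smoothedDirDeriv_sub_inner_le {f : E → ℝ} {μ L : ℝ} (hμ : 0 < μ)
    (hf : ∀ x y, ‖gradient f x - gradient f y‖ ≤ L * ‖x - y‖) (p v : E) :
    |smoothedDirDeriv f μ p v - ⟪gradient f p, v⟫| ≤ L * ‖v‖ ^ 2 * μ / 2 := by
  set g : ℝ → ℝ := fun t => ⟪gradient f (p + t • v), v⟫
  have hg0 : g 0 = ⟪gradient f p, v⟫ := by simp only [g, zero_smul, add_zero]
  have hcont : Continuous g :=
    ((continuous_of_norm_sub_le_mul hf).comp
      (continuous_const.add (continuous_id.smul continuous_const))).inner continuous_const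
  have hlip (t : ℝ) : |g t - g 0| ≤ L * ‖v‖ ^ 2 * |t| :=
    calc |g t - g 0| = |⟪gradient f (p + t • v) - gradient f p, v⟫| := by
          rw [hg0, inner_sub_left]
      _ ≤ ‖gradient f (p + t • v) - gradient f p‖ * ‖v‖ := abs_real_inner_le_norm _ _
      _ ≤ L * ‖p + t • v - p‖ * ‖v‖ := by gcongr; exact hf _ _
      _ = L * ‖v‖ ^ 2 * |t| := by
          rw [add_sub_cancel_left, norm_smul, Real.norm_eq_abs]
          ring
  rw [← hg0]
  exact abs_intervalAverage_sub_le hμ (hcont.intervalIntegrable _ _) hlip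

lemma norm_smoothedDirDeriv_smul_sub_inner_smul_le {f : E → ℝ} {μ L : ℝ} (hμ : 0 < μ)
    (hf : ∀ x y, ‖gradient f x - gradient f y‖ ≤ L * ‖x - y‖) (p v : E) :
    ‖smoothedDirDeriv f μ p v • v - ⟪gradient f p, v⟫ • v‖ ≤ L * ‖v‖ ^ 3 * μ / 2 := by
  rw [← sub_smul, norm_smul, Real.norm_eq_abs]
  calc |smoothedDirDeriv f μ p v - ⟪gradient f p, v⟫| * ‖v‖ ≤ L * ‖v‖ ^ 2 * μ / 2 * ‖v‖ := by
        gcongr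
        exact abs_smoothedDirDeriv_sub_inner_le hμ hf p v
    _ = L * ‖v‖ ^ 3 * μ / 2 := by ring

end SmoothedDirDeriv

section SphereMoments

variable {ι : Type*} [Fintype ι] {α : ℝ} {σ : Measure (EuclideanSpace ℝ ι)}

noncomputable def negCoordIso [DecidableEq ι] (j : ι) :
    EuclideanSpace ℝ ι ≃ₗᵢ[ℝ] EuclideanSpace ℝ ι :=
  LinearIsometryEquiv.piLpCongrRight 2
    (fun k => if k = j then LinearIsometryEquiv.neg ℝ else LinearIsometryEquiv.refl ℝ ℝ)

lemma negCoordIso_apply [DecidableEq ι] (j k : ι) (v : EuclideanSpace ℝ ι) :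
    negCoordIso j v k = if k = j then -v k else v k := by
  simp only [negCoordIso, LinearIsometryEquiv.piLpCongrRight_apply]
  split_ifs <;> simp

lemma integral_mul_coord_eq_zero (hrot : ∀ R : EuclideanSpace ℝ ι ≃ₗᵢ[ℝ] EuclideanSpace ℝ ι,
    Measure.map R σ = σ) {i j : ι} (hij : i ≠ j) : ∫ v, v i * v j ∂σ = 0 := by
  classical
  have h := integral_comp_linearIsometryEquiv_of_map_eq (hrot (negCoordIso j)) fun v => v i * v j
  simp only [negCoordIso_apply, if_neg hij, ↓reduceIte, mul_neg, integral_neg] at h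
  linarith

lemma integral_coord_sq_eq (hrot : ∀ R : EuclideanSpace ℝ ι ≃ₗᵢ[ℝ] EuclideanSpace ℝ ι,
    Measure.map R σ = σ) (i j : ι) : ∫ v, v i ^ 2 ∂σ = ∫ v, v j ^ 2 ∂σ := by
  classical
  have h := integral_comp_linearIsometryEquiv_of_map_eq
    (hrot (LinearIsometryEquiv.piLpCongrLeft 2 ℝ ℝ (Equiv.swap i j))) fun v => v i ^ 2
  simpa [LinearIsometryEquiv.piLpCongrLeft_apply, Equiv.symm_swap] using h.symm

variable [IsProbabilityMeasure σ]

lemma integral_coord_sq (hsphere : ∀ᵐ v ∂σ, ‖v‖ = α)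
    (hrot : ∀ R : EuclideanSpace ℝ ι ≃ₗᵢ[ℝ] EuclideanSpace ℝ ι, Measure.map R σ = σ) (i : ι) :
    ∫ v, v i ^ 2 ∂σ = α ^ 2 / Fintype.card ι := by
  have hsum : ∑ j, ∫ v, v j ^ 2 ∂σ = α ^ 2 := by
    rw [← integral_finsetSum _ fun j _ =>
      (by fun_prop : Continuous fun v : EuclideanSpace ℝ ι => v j ^ 2)
        |>.integrable_of_ae_norm_eq hsphere]
    refine integral_eq_const ?_
    filter_upwards [hsphere] with v hv
    rw [← hv, EuclideanSpace.real_norm_sq_eq]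
  rw [Finset.sum_congr rfl fun j _ => integral_coord_sq_eq hrot j i, Finset.sum_const,
    Finset.card_univ, nsmul_eq_mul] at hsum
  have hcard : (Fintype.card ι : ℝ) ≠ 0 := Nat.cast_ne_zero.mpr (Fintype.card_pos_iff.mpr ⟨i⟩).ne'
  rw [← hsum]
  field_simp

theorem integral_inner_smul_eq_smul (hsphere : ∀ᵐ v ∂σ, ‖v‖ = α)
    (hrot : ∀ R : EuclideanSpace ℝ ι ≃ₗᵢ[ℝ] EuclideanSpace ℝ ι, Measure.map R σ = σ)
    (w : EuclideanSpace ℝ ι) :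
    ∫ v, ⟪w, v⟫ • v ∂σ = (α ^ 2 / Fintype.card ι) • w := by
  ext j
  have hint : Integrable (fun v => ⟪w, v⟫ • v) σ :=
    (by fun_prop : Continuous fun v : EuclideanSpace ℝ ι => ⟪w, v⟫ • v)
      |>.integrable_of_ae_norm_eq hsphere
  have hcoord (v : EuclideanSpace ℝ ι) : ⟪w, v⟫ * v j = ∑ i, w i * (v i * v j) := by
    simp [PiLp.inner_apply, Finset.mul_sum, mul_comm, mul_left_comm]
  calc (∫ v, ⟪w, v⟫ • v ∂σ) j = ∫ v, ⟪w, v⟫ * v j ∂σ := by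
        simpa using ((EuclideanSpace.proj j).integral_comp_comm hint).symm
    _ = ∑ i, w i * ∫ v, v i * v j ∂σ := by
        simp_rw [hcoord]
        rw [integral_finsetSum _ fun i _ => (by fun_prop : Continuous fun v : EuclideanSpace ℝ ι =>
          w i * (v i * v j)).integrable_of_ae_norm_eq hsphere]
        simp_rw [integral_const_mul]
    _ = w j * ∫ v, v j ^ 2 ∂σ := by
        rw [Finset.sum_eq_single j
          (fun i _ hij => by rw [integral_mul_coord_eq_zero hrot hij, mul_zero]) (by simp)]
        simp_rw [sq]
    _ = ((α ^ 2 / Fintype.card ι) • w) j := by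
        rw [integral_coord_sq hsphere hrot j, PiLp.smul_apply, smul_eq_mul, mul_comm]

end SphereMoments

theorem gw_smoothed_gradient_error_general
    (n : ℕ) (α μ L : ℝ) (hμ : 0 < μ)
    (σ : Measure (EuclideanSpace ℝ (Fin n))) [IsProbabilityMeasure σ]
    (hσ_sphere : ∀ᵐ v ∂σ, ‖v‖ = α)
    (hσ_rot : ∀ R : EuclideanSpace ℝ (Fin n) ≃ₗᵢ[ℝ] EuclideanSpace ℝ (Fin n),
      Measure.map R σ = σ)
    (f : EuclideanSpace ℝ (Fin n) → ℝ)
    (hf_smooth : ∀ x y, ‖gradient f x - gradient f y‖ ≤ L * ‖x - y‖)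
    (p : EuclideanSpace ℝ (Fin n)) :
    ‖(∫ v, ((1 / (2 * μ)) * ∫ t in (-μ)..μ, (inner ℝ (gradient f (p + t • v)) v : ℝ)) • v ∂σ) -
        (α ^ 2 / n) • gradient f p‖
      ≤ L * α ^ 3 * μ / 2 := by
  have hmoment := integral_inner_smul_eq_smul hσ_sphere hσ_rot (gradient f p)
  rw [Fintype.card_fin] at hmoment
  have hG := continuous_smoothedDirDeriv (continuous_of_norm_sub_le_mul hf_smooth) μ p
  have hint_smoothed : Integrable (fun v => smoothedDirDeriv f μ p v • v) σ :=
    (by fun_prop : Continuous fun v => smoothedDirDeriv f μ p v • v)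
      |>.integrable_of_ae_norm_eq hσ_sphere
  have hint_inner : Integrable (fun v => ⟪gradient f p, v⟫ • v) σ :=
    (by fun_prop : Continuous fun v : EuclideanSpace ℝ (Fin n) => ⟪gradient f p, v⟫ • v)
      |>.integrable_of_ae_norm_eq hσ_sphere
  change ‖∫ v, smoothedDirDeriv f μ p v • v ∂σ - _‖ ≤ _
  rw [← hmoment, ← integral_sub hint_smoothed hint_inner]
  refine (norm_integral_le_of_norm_le_const (C := L * α ^ 3 * μ / 2) ?_).trans_eq (by simp)
  filter_upwards [hσ_sphere] with v hv
  simpa only [hv] using norm_smoothedDirDeriv_smul_sub_inner_smul_le hμ hf_smooth p v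

/-- For an `L`-smooth `f : ℝⁿ → ℝ`, averaging the smoothed directional
derivatives against `v ∼ σ` (uniform on the sphere of radius `α`) recovers `(α²/n) • ∇f(p)`
up to an error of `Lα³μ/2` in norm. -/
theorem gw_smoothed_gradient_error
    (n : ℕ) (hn : 1 ≤ n) (α μ L : ℝ) (hα : 0 < α) (hμ : 0 < μ) (hL : 0 ≤ L)
    (σ : Measure (EuclideanSpace ℝ (Fin n))) [IsProbabilityMeasure σ]
    (hσ_sphere : ∀ᵐ v ∂σ, ‖v‖ = α)
    (hσ_rot : ∀ R : EuclideanSpace ℝ (Fin n) ≃ₗᵢ[ℝ] EuclideanSpace ℝ (Fin n),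
      Measure.map R σ = σ)
    (f : EuclideanSpace ℝ (Fin n) → ℝ)
    (hf_diff : Differentiable ℝ f)
    (hf_smooth : ∀ x y, ‖gradient f x - gradient f y‖ ≤ L * ‖x - y‖)
    (p : EuclideanSpace ℝ (Fin n)) :
    ‖(∫ v, ((1 / (2 * μ)) * ∫ t in (-μ)..μ, (inner ℝ (gradient f (p + t • v)) v : ℝ)) • v ∂σ) -
        (α ^ 2 / n) • gradient f p‖
      ≤ L * α ^ 3 * μ / 2 :=
  gw_smoothed_gradient_error_general n α μ L hμ σ hσ_sphere hσ_rot f hf_smooth p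
end
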